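/- arXiv:0801.3047 — 3 statements merged into one kernel-verified Lean document; each statement's English description precedes it below -/
import Mathlib

section
/- (Proposition 1) Let H be a real inner product space and let x, y, z ∈ H be nonzero. Then the function d(x,y) = √(1 - ρ(x,y)²) satisfies the triangle inequality: d(x,z) ≤ d(x,y) + d(y,z). -/
/-!
For unit vectors, `√(1 - ⟪u, v⟫²)` is the distance from `u` to the line `ℝ v`, attained at the
orthogonal projection `⟪u, v⟫ • v`. After normalizing `x, y, z`: go from `x` to its projection
`s • y` on `ℝ y` (`s = ⟪x, y⟫`), then along `s • (y - ⟪y, z⟫ • z)`, whose length is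
`|s| · d(y, z) ≤ d(y, z)`. This lands on the line `ℝ z`, so `d(x, z) ≤ d(x, y) + d(y, z)`.
-/

open RealInnerProductSpace

section UnitVectors

variable {H : Type*} [NormedAddCommGroup H] [InnerProductSpace ℝ H] {u v : H}

theorem norm_sub_smul_sq_of_norm_eq_one (hu : ‖u‖ = 1) (hv : ‖v‖ = 1) (t : ℝ) :
    ‖u - t • v‖ ^ 2 = 1 - ⟪u, v⟫ ^ 2 + (t - ⟪u, v⟫) ^ 2 := by
  rw [norm_sub_sq_real, real_inner_smul_right, norm_smul, hu, hv, Real.norm_eq_abs, mul_one,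
    sq_abs]
  ring

theorem sqrt_one_sub_inner_sq_le_norm_sub_smul (hu : ‖u‖ = 1) (hv : ‖v‖ = 1) (t : ℝ) :
    √(1 - ⟪u, v⟫ ^ 2) ≤ ‖u - t • v‖ := by
  rw [Real.sqrt_le_left (norm_nonneg _), norm_sub_smul_sq_of_norm_eq_one hu hv]
  nlinarith [sq_nonneg (t - ⟪u, v⟫)]

theorem norm_sub_inner_smul_eq_sqrt (hu : ‖u‖ = 1) (hv : ‖v‖ = 1) :
    ‖u - ⟪u, v⟫ • v‖ = √(1 - ⟪u, v⟫ ^ 2) := by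
  rw [← Real.sqrt_sq (norm_nonneg _), norm_sub_smul_sq_of_norm_eq_one hu hv, sub_self,
    zero_pow two_ne_zero, add_zero]

theorem abs_real_inner_le_one (hu : ‖u‖ = 1) (hv : ‖v‖ = 1) : |⟪u, v⟫| ≤ 1 := by
  simpa [hu, hv] using abs_real_inner_le_norm u v

theorem sqrt_one_sub_inner_sq_triangle {w : H} (hu : ‖u‖ = 1) (hv : ‖v‖ = 1) (hw : ‖w‖ = 1) :
    √(1 - ⟪u, w⟫ ^ 2) ≤ √(1 - ⟪u, v⟫ ^ 2) + √(1 - ⟪v, w⟫ ^ 2) := by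
  set s := ⟪u, v⟫
  set q := ⟪v, w⟫
  calc √(1 - ⟪u, w⟫ ^ 2)
      ≤ ‖u - (s * q) • w‖ := sqrt_one_sub_inner_sq_le_norm_sub_smul hu hw _
    _ = ‖(u - s • v) + s • (v - q • w)‖ := by rw [smul_sub, smul_smul]; abel_nf
    _ ≤ ‖u - s • v‖ + |s| * ‖v - q • w‖ := by
        rw [← Real.norm_eq_abs, ← norm_smul]; exact norm_add_le _ _
    _ ≤ ‖u - s • v‖ + ‖v - q • w‖ := by
        gcongr; exact mul_le_of_le_one_left (norm_nonneg _) (abs_real_inner_le_one hu hv)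
    _ = √(1 - s ^ 2) + √(1 - q ^ 2) := by
        rw [norm_sub_inner_smul_eq_sqrt hu hv, norm_sub_inner_smul_eq_sqrt hv hw]

end UnitVectors

theorem real_inner_inv_norm_smul_inv_norm_smul {H : Type*} [NormedAddCommGroup H]
    [InnerProductSpace ℝ H] (a b : H) :
    ⟪‖a‖⁻¹ • a, ‖b‖⁻¹ • b⟫ = ⟪a, b⟫ / (‖a‖ * ‖b‖) := by
  rw [real_inner_smul_left, real_inner_smul_right, div_eq_mul_inv, mul_inv]
  ring

/-- (Proposition 1) The function `d(x,y) = √(1 - ρ(x,y)²)` satisfies the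
triangle inequality. -/
theorem sqrt_one_sub_corr_sq_triangle {H : Type*} [NormedAddCommGroup H]
    [InnerProductSpace ℝ H] (x y z : H) (hx : x ≠ 0) (hy : y ≠ 0) (hz : z ≠ 0)
    (ρ : H → H → ℝ) (hρ : ∀ a b, ρ a b = (inner ℝ a b : ℝ) / (‖a‖ * ‖b‖))
    (d : H → H → ℝ) (hd : ∀ a b, d a b = Real.sqrt (1 - (ρ a b) ^ 2)) :
    d x z ≤ d x y + d y z := by
  simp only [hd, hρ, ← real_inner_inv_norm_smul_inv_norm_smul]
  exact sqrt_one_sub_inner_sq_triangle (norm_smul_inv_norm hx) (norm_smul_inv_norm hy)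
    (norm_smul_inv_norm hz)
end

section
/- (Pointwise kernel of Proposition 2 of the appendix) Let H be a complex inner product space and let x, y, z ∈ H be nonzero. Then √(1 - C(x,z)) ≤ √(1 - C(x,y)) + √(1 - C(y,z)). (At each fixed frequency ω this is the inequality √(1 - C_{X_1X_3}(ω)) ≤ √(1 - C_{X_1X_2}(ω)) + √(1 - C_{X_2X_3}(ω)) obtained from the optimality of the Wiener filter, the Schwarz inequality for cross-spectra, and the bound C ≤ 1.) -/
/-!
Coherence is scale invariant, so we may take `x`, `y`, `z` to be unit vectors. Splitting `x` and
`z` along `y` and `y^⊥` gives `⟪x, z⟫ = ⟪x, y⟫⟪y, z⟫ + ⟪u, w⟫` with `‖u‖ = √(1 - C(x,y))` and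
`‖w‖ = √(1 - C(y,z))`, so by Cauchy–Schwarz `|⟪x, z⟫| ≥ cos α cos β - sin α sin β = cos (α + β)`,
where `cos α = |⟪x, y⟫|` and `cos β = |⟪y, z⟫|`. The claim becomes
`sin (α + β) ≤ sin α + sin β`.
-/

open scoped InnerProductSpace

section

variable {H : Type*} [NormedAddCommGroup H] [InnerProductSpace ℂ H]

lemma norm_inner_normalize_sq (x y : H) :
    ‖⟪NormedSpace.normalize x, NormedSpace.normalize y⟫_ℂ‖ ^ 2
      = ‖⟪x, y⟫_ℂ‖ ^ 2 / (‖x‖ ^ 2 * ‖y‖ ^ 2) := by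
  simp only [NormedSpace.normalize, RCLike.real_smul_eq_coe_smul (K := ℂ), inner_smul_left,
    inner_smul_right, norm_mul, Complex.norm_conj, RCLike.norm_ofReal, abs_inv, abs_norm]
  ring

lemma inner_sub_inner_smul {y : H} (hy : ‖y‖ = 1) (x z : H) :
    ⟪x - ⟪y, x⟫_ℂ • y, z - ⟪y, z⟫_ℂ • y⟫_ℂ = ⟪x, z⟫_ℂ - ⟪x, y⟫_ℂ * ⟪y, z⟫_ℂ := by
  simp only [inner_sub_left, inner_sub_right, inner_smul_left, inner_smul_right,
    inner_self_eq_norm_sq_to_K, hy, inner_conj_symm]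
  push_cast
  ring

lemma norm_sub_inner_smul_sq {y : H} (hy : ‖y‖ = 1) (x : H) :
    ‖x - ⟪y, x⟫_ℂ • y‖ ^ 2 = ‖x‖ ^ 2 - ‖⟪x, y⟫_ℂ‖ ^ 2 := by
  have h := congrArg Complex.re (inner_sub_inner_smul hy x x)
  have hxy : ⟪x, y⟫_ℂ * ⟪y, x⟫_ℂ = (‖⟪x, y⟫_ℂ‖ ^ 2 : ℝ) := by
    rw [← inner_conj_symm y x, Complex.mul_conj']
    push_cast
    rfl
  rw [inner_self_eq_norm_sq_to_K, inner_self_eq_norm_sq_to_K, hxy] at h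
  exact_mod_cast h

lemma norm_inner_mul_norm_inner_sub_le (x z : H) {y : H} (hy : ‖y‖ = 1) :
    ‖⟪x, y⟫_ℂ‖ * ‖⟪y, z⟫_ℂ‖ - ‖x - ⟪y, x⟫_ℂ • y‖ * ‖z - ⟪y, z⟫_ℂ • y‖ ≤ ‖⟪x, z⟫_ℂ‖ := by
  calc ‖⟪x, y⟫_ℂ‖ * ‖⟪y, z⟫_ℂ‖ - ‖x - ⟪y, x⟫_ℂ • y‖ * ‖z - ⟪y, z⟫_ℂ • y‖
      ≤ ‖⟪x, y⟫_ℂ * ⟪y, z⟫_ℂ‖ - ‖⟪x - ⟪y, x⟫_ℂ • y, z - ⟪y, z⟫_ℂ • y⟫_ℂ‖ := by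
        rw [norm_mul]
        gcongr
        exact norm_inner_le_norm _ _
    _ ≤ ‖⟪x, z⟫_ℂ‖ := by
        rw [inner_sub_inner_smul hy, sub_le_iff_le_add]
        exact norm_le_norm_add_norm_sub _ _

end

/-- With `c = cos α`, `s = sin α`, `c' = cos β`, `t = sin β`, this is `sin (α + β) ≤ sin α + sin β`
for `α, β ∈ [0, π/2]` and any `r ≥ cos (α + β)`. -/
lemma sqrt_one_sub_sq_le_add {c c' s t r : ℝ} (hc : 0 ≤ c) (hc' : 0 ≤ c') (hs : 0 ≤ s)
    (ht : 0 ≤ t) (hcs : c ^ 2 + s ^ 2 = 1) (hct : c' ^ 2 + t ^ 2 = 1)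
    (h : c * c' - s * t ≤ r) : √(1 - r ^ 2) ≤ s + t := by
  rcases le_or_gt 1 (s + t) with hst | hst
  · exact (Real.sqrt_le_one.mpr (by nlinarith)).trans hst
  have hcos_nonneg : s * t ≤ c * c' := by
    nlinarith [mul_nonneg hs ht, mul_nonneg hc hc']
  have hsin_add : 1 - (c * c' - s * t) ^ 2 = (s * c' + c * t) ^ 2 := by
    linear_combination (-(c' ^ 2) - t ^ 2) * hcs - hct
  have hc1 : c ≤ 1 := by nlinarith
  have hc'1 : c' ≤ 1 := by nlinarith
  have hsin_add_le : s * c' + c * t ≤ s + t := by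
    linarith [mul_le_of_le_one_right hs hc'1, mul_le_of_le_one_left ht hc1]
  refine Real.sqrt_le_iff.mpr ⟨by positivity, ?_⟩
  calc 1 - r ^ 2 ≤ 1 - (c * c' - s * t) ^ 2 := by gcongr
    _ = (s * c' + c * t) ^ 2 := hsin_add
    _ ≤ (s + t) ^ 2 := by gcongr

theorem sqrt_one_sub_norm_inner_sq_triangle {H : Type*} [NormedAddCommGroup H]
    [InnerProductSpace ℂ H] {x y z : H} (hx : ‖x‖ = 1) (hy : ‖y‖ = 1) (hz : ‖z‖ = 1) :
    √(1 - ‖⟪x, z⟫_ℂ‖ ^ 2) ≤ √(1 - ‖⟪x, y⟫_ℂ‖ ^ 2) + √(1 - ‖⟪y, z⟫_ℂ‖ ^ 2) := by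
  have hxy := norm_sub_inner_smul_sq hy x
  have hzy := norm_sub_inner_smul_sq hy z
  rw [hx, one_pow] at hxy
  rw [hz, one_pow, norm_inner_symm] at hzy
  rw [← hxy, ← hzy, Real.sqrt_sq (norm_nonneg _), Real.sqrt_sq (norm_nonneg _)]
  exact sqrt_one_sub_sq_le_add (norm_nonneg _) (norm_nonneg _) (norm_nonneg _) (norm_nonneg _)
    (by rw [hxy]; ring) (by rw [hzy]; ring) (norm_inner_mul_norm_inner_sub_le x z hy)

/-- (Pointwise kernel of Proposition 2 of the appendix) The frequency-pointwise
distance `√(1 - C)` built from the coherence satisfies the triangle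
inequality. -/
theorem sqrt_one_sub_coherence_triangle {H : Type*} [NormedAddCommGroup H]
    [InnerProductSpace ℂ H] (x y z : H) (hx : x ≠ 0) (hy : y ≠ 0) (hz : z ≠ 0)
    (C : H → H → ℝ)
    (hC : ∀ a b, C a b = ‖(inner ℂ a b : ℂ)‖ ^ 2 / (‖a‖ ^ 2 * ‖b‖ ^ 2)) :
    Real.sqrt (1 - C x z) ≤ Real.sqrt (1 - C x y) + Real.sqrt (1 - C y z) := by
  simp only [hC, ← norm_inner_normalize_sq]
  exact sqrt_one_sub_norm_inner_sq_triangle (NormedSpace.norm_normalize hx)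
    (NormedSpace.norm_normalize hy) (NormedSpace.norm_normalize hz)
end

section
/- (Proposition 3 of the appendix, equal weights on cycles) Let V be a finite type, d : V → V → ℝ a symmetric weight function (d i j = d j i), and m : V → V a nearest-neighbor selection, i.e. m j ≠ j and d j (m j) ≤ d j i for every i ≠ j. Let G be the simple graph on V whose edge set is A = {⟦(j, m j)⟧ : j ∈ V}. If n_0, n_1, …, n_{k-1} (k ≥ 3, all distinct) is a cycle in G, i.e. ⟦(n_i, n_{i+1 mod k})⟧ ∈ A for every i, then all the weights d n_i n_{i+1 mod k} along the cycle are equal. -/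
/-!
Orient each edge `s(n i, n (i+1))` of the cycle by the vertex `j` whose nearest-neighbor arc
`j ↦ m j` it is. Two consecutive edges cannot both point into their common vertex `n (i+1)`,
since `m (n (i+1))` is a single vertex and `n i ≠ n (i+2)`. Hence all edges are oriented the
same way around the cycle. If every `n i` chose `n (i+1)`, the minimality of `m` gives
`d (n (i+1)) (n (i+2)) ≤ d (n (i+1)) (n i)`, so the weights decrease around the cycle and are
therefore constant; the other orientation is symmetric.
-/

open Function

namespace ZMod

variable {k : ℕ}

theorem le_of_forall_add_one_le [NeZero k] {α : Type*} [Preorder α] {f : ZMod k → α}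
    (hf : ∀ x, f (x + 1) ≤ f x) (x y : ZMod k) : f x ≤ f y := by
  have descend : ∀ t : ℕ, f (y + t) ≤ f y := by
    intro t
    induction t with
    | zero => simp
    | succ t ih => simpa [add_assoc] using (hf (y + t)).trans ih
  simpa using descend (x - y).val

theorem eq_of_forall_add_one_le [NeZero k] {α : Type*} [PartialOrder α] {f : ZMod k → α}
    (hf : ∀ x, f (x + 1) ≤ f x) (x y : ZMod k) : f x = f y :=
  le_antisymm (le_of_forall_add_one_le hf x y) (le_of_forall_add_one_le hf y x)

theorem add_natCast_ne_self {a : ℕ} (ha : 0 < a) (hak : a < k) (x : ZMod k) :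
    x + a ≠ x := by
  rw [add_ne_left, Ne, natCast_eq_zero_iff]
  exact fun h => absurd (Nat.le_of_dvd ha h) (by omega)

end ZMod

theorem Sym2.apply_eq_or_apply_eq_of_mk_eq {V : Type*} {m : V → V} {a b j : V}
    (h : s(a, b) = s(j, m j)) : m a = b ∨ m b = a := by
  rcases Sym2.eq_iff.mp h with ⟨rfl, rfl⟩ | ⟨rfl, rfl⟩
  exacts [Or.inl rfl, Or.inr rfl]

namespace NearestNeighborCycle

variable {V : Type*} {k : ℕ} (d : V → V → ℝ) (m : V → V) (N : ZMod k → V)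

theorem forward_of_forward_add_one (hN2 : ∀ x, N (x + 2) ≠ N x)
    (hedge : ∀ x, m (N x) = N (x + 1) ∨ m (N (x + 1)) = N x) (x : ZMod k)
    (h : m (N (x + 1)) = N (x + 1 + 1)) : m (N x) = N (x + 1) := by
  refine (hedge x).resolve_right fun hback => hN2 x ?_
  rw [← one_add_one_eq_two, ← add_assoc, ← h, hback]

theorem forall_forward_or_forall_backward [NeZero k] (hN2 : ∀ x, N (x + 2) ≠ N x)
    (hedge : ∀ x, m (N x) = N (x + 1) ∨ m (N (x + 1)) = N x) :
    (∀ x, m (N x) = N (x + 1)) ∨ ∀ x, m (N (x + 1)) = N x := by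
  by_cases hfwd : ∃ x₀, m (N x₀) = N (x₀ + 1)
  · obtain ⟨x₀, h₀⟩ := hfwd
    -- on `Prop`, `≤` is implication
    exact .inl fun x => ZMod.le_of_forall_add_one_le (f := fun x => m (N x) = N (x + 1))
      (forward_of_forward_add_one m N hN2 hedge) x₀ x h₀
  · simp only [not_exists] at hfwd
    exact .inr fun x => (hedge x).resolve_left (hfwd x)

variable {d m N}

theorem weight_add_one_le_of_forward (hsymm : ∀ i j, d i j = d j i)
    (hmin : ∀ j i, i ≠ j → d j (m j) ≤ d j i) (hN1 : ∀ x, N (x + 1) ≠ N x) {x : ZMod k}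
    (hx : m (N (x + 1)) = N (x + 1 + 1)) :
    d (N (x + 1)) (N (x + 1 + 1)) ≤ d (N x) (N (x + 1)) := by
  rw [← hx, hsymm (N x)]
  exact hmin _ _ (hN1 x).symm

theorem weight_le_weight_add_one_of_backward (hsymm : ∀ i j, d i j = d j i)
    (hmin : ∀ j i, i ≠ j → d j (m j) ≤ d j i) (hN1 : ∀ x, N (x + 1) ≠ N x) {x : ZMod k}
    (hx : m (N (x + 1)) = N x) :
    d (N x) (N (x + 1)) ≤ d (N (x + 1)) (N (x + 1 + 1)) := by
  rw [hsymm, ← hx]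
  exact hmin _ _ (hN1 (x + 1))

theorem cycle_weights_eq [NeZero k] (hsymm : ∀ i j, d i j = d j i)
    (hmin : ∀ j i, i ≠ j → d j (m j) ≤ d j i) (hN1 : ∀ x, N (x + 1) ≠ N x)
    (hN2 : ∀ x, N (x + 2) ≠ N x) (hedge : ∀ x, m (N x) = N (x + 1) ∨ m (N (x + 1)) = N x)
    (x y : ZMod k) : d (N x) (N (x + 1)) = d (N y) (N (y + 1)) := by
  rcases forall_forward_or_forall_backward m N hN2 hedge with hfwd | hbwd
  · exact ZMod.eq_of_forall_add_one_le (f := fun x => d (N x) (N (x + 1)))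
      (fun x => weight_add_one_le_of_forward hsymm hmin hN1 (hfwd (x + 1))) x y
  · exact ZMod.eq_of_forall_add_one_le (α := ℝᵒᵈ) (f := fun x => d (N x) (N (x + 1)))
      (fun x => weight_le_weight_add_one_of_backward hsymm hmin hN1 (hbwd x)) x y

end NearestNeighborCycle

theorem clusterization_cycle_equal_weights_general {V : Type*}
    (d : V → V → ℝ) (hsymm : ∀ i j, d i j = d j i)
    (m : V → V)
    (hmin : ∀ j i, i ≠ j → d j (m j) ≤ d j i)
    (k : ℕ) (hk : 3 ≤ k) (n : ℕ → V)
    (hinj : ∀ i j, i < k → j < k → n i = n j → i = j)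
    (hcycle : ∀ i, i < k → ∃ j : V, s(n i, n ((i + 1) % k)) = s(j, m j)) :
    ∀ i i', i < k → i' < k →
      d (n i) (n ((i + 1) % k)) = d (n i') (n ((i' + 1) % k)) := by
  have : NeZero k := ⟨by omega⟩
  set N : ZMod k → V := fun x => n x.val
  have hN_natCast (i : ℕ) : N i = n (i % k) := by simp [N, ZMod.val_natCast]
  have hN_add_one (i : ℕ) : N (i + 1) = n ((i + 1) % k) := by exact_mod_cast hN_natCast (i + 1)
  have hN_inj : Injective N := fun x y h => ZMod.val_injective k (hinj _ _ x.val_lt y.val_lt h)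
  have hN1 (x : ZMod k) : N (x + 1) ≠ N x :=
    hN_inj.ne (by exact_mod_cast ZMod.add_natCast_ne_self (a := 1) one_pos (by omega) x)
  have hN2 (x : ZMod k) : N (x + 2) ≠ N x :=
    hN_inj.ne (by exact_mod_cast ZMod.add_natCast_ne_self (a := 2) two_pos (by omega) x)
  have hedge (x : ZMod k) : m (N x) = N (x + 1) ∨ m (N (x + 1)) = N x := by
    obtain ⟨j, hj⟩ := hcycle x.val x.val_lt
    rw [← hN_add_one, ZMod.natCast_zmod_val] at hj
    exact Sym2.apply_eq_or_apply_eq_of_mk_eq hj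
  intro i i' hi hi'
  have hweight : ∀ i < k, d (n i) (n ((i + 1) % k)) = d (N i) (N (i + 1)) := fun i hi => by
    rw [hN_natCast, Nat.mod_eq_of_lt hi, hN_add_one]
  rw [hweight i hi, hweight i' hi']
  exact NearestNeighborCycle.cycle_weights_eq hsymm hmin hN1 hN2 hedge _ _

/-- (Proposition 3 of the appendix, equal weights on cycles) If the graph
produced by the nearest-neighbor clusterization algorithm contains a cycle
`n 0, n 1, …, n (k-1)` (all vertices distinct, `k ≥ 3`, consecutive pairs
taken mod `k` being arcs of `A = {⟦(j, m j)⟧ : j}`), then all the weights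
along the cycle are equal. -/
theorem clusterization_cycle_equal_weights {V : Type*} [Fintype V]
    (d : V → V → ℝ) (hsymm : ∀ i j, d i j = d j i)
    (m : V → V) (hm : ∀ j, m j ≠ j)
    (hmin : ∀ j i, i ≠ j → d j (m j) ≤ d j i)
    (k : ℕ) (hk : 3 ≤ k) (n : ℕ → V)
    (hinj : ∀ i j, i < k → j < k → n i = n j → i = j)
    (hcycle : ∀ i, i < k → ∃ j : V, s(n i, n ((i + 1) % k)) = s(j, m j)) :
    ∀ i i', i < k → i' < k →
      d (n i) (n ((i + 1) % k)) = d (n i') (n ((i' + 1) % k)) :=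
  clusterization_cycle_equal_weights_general d hsymm m hmin k hk n hinj hcycle
end
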